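/- Let f ∈ L^∞(−π,π], let g ≥ 2 be an integer, and set μ_g = ⌈n/g⌉. Let 𝒯_{n,g} be the n×(n−μ_g) matrix formed by the last n−μ_g columns of T_{n,g}(f), and let [0|𝒯_{n,g}] be the n×n matrix obtained by prepending μ_g zero columns. Then ‖[0|𝒯_{n,g}]‖_1 = o(n) as n → ∞. -/

import Mathlib

open MeasureTheory Filter Matrix Polynomial Asymptotics
open scoped Classical

noncomputable section

/-- The domain `(-π, π]`. -/
def Tset : Set ℝ := Set.Ioc (-Real.pi) Real.pi

/-- Lebesgue measure restricted to `(-π, π]`. -/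
def muT : Measure ℝ := volume.restrict Tset

/-- The `k`-th Fourier coefficient of `f` on `(-π, π]`. -/
def fhat (f : ℝ → ℂ) (k : ℤ) : ℂ :=
  (1 / (2 * (Real.pi : ℂ))) *
    ∫ t in Tset, f t * Complex.exp (-Complex.I * (k : ℂ) * (t : ℂ))

/-- The `n × n` `g`-Toeplitz matrix of symbol `f`. -/
def gToeplitz (n g : ℕ) (f : ℝ → ℂ) : Matrix (Fin n) (Fin n) ℂ :=
  Matrix.of fun r s => fhat f ((r : ℤ) - (g : ℤ) * (s : ℤ))

/-- `f ∈ L^∞(-π, π]`. -/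
def MemLinf (f : ℝ → ℂ) : Prop := MeasureTheory.MemLp f ⊤ muT

/-- The `L^∞` norm of `f` on `(-π, π]`. -/
def linfNorm (f : ℝ → ℂ) : ℝ := (eLpNorm f ⊤ muT).toReal

/-- The singular values of a complex square matrix. -/
def singVals {N : ℕ} (X : Matrix (Fin N) (Fin N) ℂ) : Fin N → ℝ :=
  fun i => Real.sqrt ((Matrix.isHermitian_conjTranspose_mul_self X).eigenvalues i)

/-- The trace norm (Schatten 1-norm): sum of the singular values. -/
def traceNorm {N : ℕ} (X : Matrix (Fin N) (Fin N) ℂ) : ℝ :=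
  ∑ i, singVals X i

/-- The Schatten `q`-norm. -/
def schattenNorm {N : ℕ} (q : ℝ) (X : Matrix (Fin N) (Fin N) ℂ) : ℝ :=
  (∑ i, singVals X i ^ q) ^ (1 / q)

/-- The spectral norm: operator norm induced by the Euclidean norm. -/
def specNorm {N : ℕ} (X : Matrix (Fin N) (Fin N) ℂ) : ℝ :=
  ‖Matrix.toEuclideanCLM (𝕜 := ℂ) X‖

/-- The eigenvalues of a complex matrix, with multiplicity. -/
def eigs {N : ℕ} (A : Matrix (Fin N) (Fin N) ℂ) : Multiset ℂ := A.charpoly.roots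

/-- The number of eigenvalues of `A` lying outside the `ε`-neighborhood of `S`. -/
def outCount {N : ℕ} (A : Matrix (Fin N) (Fin N) ℂ) (S : Set ℂ) (ε : ℝ) : ℕ :=
  Multiset.card (Multiset.filter (fun z => ∀ w ∈ S, ε ≤ dist z w) (eigs A))

/-- Weak clustering (in the sense of eigenvalues) of a matrix sequence at a set `S`. -/
def weakCluster (d : ℕ → ℕ) (A : ∀ n, Matrix (Fin (d n)) (Fin (d n)) ℂ) (S : Set ℂ) : Prop :=
  ∀ ε : ℝ, 0 < ε →
    Tendsto (fun n => (outCount (A n) S ε : ℝ) / (d n : ℝ)) atTop (nhds 0)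

/-- Distribution in the sense of eigenvalues as the pair `(θ, G)`. -/
def distEig (d : ℕ → ℕ) (A : ∀ n, Matrix (Fin (d n)) (Fin (d n)) ℂ)
    (θ : ℝ → ℂ) (G : Set ℝ) : Prop :=
  ∀ F : ℂ → ℂ, Continuous F → HasCompactSupport F →
    Tendsto (fun n => ((eigs (A n)).map F).sum / (d n : ℂ)) atTop
      (nhds ((∫ t in G, F (θ t)) / (((volume G).toReal : ℝ) : ℂ)))

/-- The essential range of `h` viewed as a function on `G`. -/
def essRange (h : ℝ → ℂ) (G : Set ℝ) : Set ℂ :=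
  {z : ℂ | ∀ ε : ℝ, 0 < ε → 0 < volume {t ∈ G | dist (h t) z < ε}}

/-- `Area(W)`: the complement of the unbounded connected component of `ℂ \ W`. -/
def area (W : Set ℂ) : Set ℂ :=
  {z : ℂ | z ∈ W ∨ Bornology.IsBounded (connectedComponentIn Wᶜ z)}

/-- `θ_g`: `1` if `g = 1` and `0` otherwise. -/
def thetag (g : ℕ) : ℂ := if g = 1 then 1 else 0

/-- The Cesàro (Fejér) mean of order `m` of `f`. -/
def cesaro (f : ℝ → ℂ) (m : ℕ) : ℝ → ℂ := fun t =>
  (1 / ((m : ℂ) + 1)) * ∑ r ∈ Finset.range (m + 1),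
    ∑ k ∈ Finset.Icc (-(r : ℤ)) (r : ℤ), fhat f k * Complex.exp (Complex.I * (k : ℂ) * (t : ℂ))

/-- The operator `u ↦ P_n^⊥ (P · (u ∘ h_g))`, written out through Fourier coefficients. -/
def TngOp (n g : ℕ) (P : ℝ → ℂ) (u : ℝ → ℂ) : ℝ → ℂ := fun t =>
  ∑ j ∈ Finset.range n,
    fhat (fun s => P s * u ((g : ℝ) * s)) (j : ℤ) * Complex.exp (Complex.I * (j : ℂ) * (t : ℂ))

/-- The annihilation hypothesis: for every `m` and `n`, the operator
`T_{n,g}^{P_{m,f₁} P_{m,f₂}}` annihilates `e^{iglt} - e^{ilt}` for every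
`l ∈ {[m/g], …, [(n-1-m)/g]}`. -/
def AnnihilHyp (g : ℕ) (f₁ f₂ : ℝ → ℂ) : Prop :=
  ∀ m n l : ℕ, m / g ≤ l → l ≤ (n - 1 - m) / g →
    TngOp n g (fun t => cesaro f₁ m t * cesaro f₂ m t)
      (fun t => Complex.exp (Complex.I * ((g * l : ℕ) : ℂ) * (t : ℂ)) -
        Complex.exp (Complex.I * ((l : ℕ) : ℂ) * (t : ℂ))) = 0

/-- `⌈n/g⌉` as a natural number. -/
def mug (n g : ℕ) : ℕ := (n + g - 1) / g


/-- `[0 | 𝒯_{n,g}]`: the last `n - ⌈n/g⌉` columns of `T_{n,g}(f)` padded by zero columns. -/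
def padT (n g : ℕ) (f : ℝ → ℂ) : Matrix (Fin n) (Fin n) ℂ :=
  Matrix.of fun r s => if (s : ℕ) < mug n g then 0 else gToeplitz n g f r s

/-- `[Ẑ_{n,g} | 0]`: the first `⌈n/g⌉` columns of `Z_{n,g}` padded by zero columns. -/
def ZhatPad (n g : ℕ) : Matrix (Fin n) (Fin n) ℂ :=
  Matrix.of fun r s =>
    if (s : ℕ) < mug n g ∧ ((r : ℤ) - (g : ℤ) * (s : ℤ)) % (n : ℤ) = 0 then 1 else 0

/-- Asymptotic equivalence of two matrix sequences. -/
def AsympEquiv (A B : ∀ n : ℕ, Matrix (Fin n) (Fin n) ℂ) : Prop :=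
  (∃ C : ℝ, ∀ n, specNorm (A n) ≤ C ∧ specNorm (B n) ≤ C) ∧
  (fun n => traceNorm (A n - B n)) =o[atTop] (fun n => (n : ℝ))

end

/-! For `s ≥ ⌈n/g⌉` every entry `f̂(r - g s)` of column `s` of `[0|𝒯_{n,g}]` has index at most
`-(s - ⌈n/g⌉)`, because `g s ≥ g ⌈n/g⌉ ≥ n > r`; the indices in a column are distinct. Hence the
squared Frobenius norm is at most `∑_{j<n} t_j`, where `t_j = ∑_{k ≥ j} |f̂(-k)|²` is the tail of
a series that converges by Parseval (`f ∈ L^∞ ⊆ L²`). Tails tend to `0`, so their Cesàro means do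
too, and the Frobenius norm squared is `o(n)`. Cauchy–Schwarz on the singular values,
`‖X‖₁ ≤ √n ‖X‖_F`, turns this into `‖[0|𝒯_{n,g}]‖₁ = o(n)`. -/

open Finset in
theorem Matrix.sum_eigenvalues_conjTranspose_mul_self {𝕜 m n : Type*} [RCLike 𝕜] [Fintype m]
    [Fintype n] [DecidableEq n] (X : Matrix m n 𝕜) :
    ∑ i, (isHermitian_conjTranspose_mul_self X).eigenvalues i = ∑ r, ∑ s, ‖X r s‖ ^ 2 := by
  apply RCLike.ofReal_injective (K := 𝕜)
  rw [RCLike.ofReal_sum, ← (isHermitian_conjTranspose_mul_self X).trace_eq_sum_eigenvalues,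
    trace, sum_comm]
  push_cast
  refine sum_congr rfl fun s _ => sum_congr rfl fun r _ => ?_
  exact RCLike.conj_mul _

theorem traceNorm_nonneg {N : ℕ} (X : Matrix (Fin N) (Fin N) ℂ) : 0 ≤ traceNorm X :=
  Finset.sum_nonneg fun _ _ => Real.sqrt_nonneg _

theorem traceNorm_le_sqrt_mul_sum_sq_norm {N : ℕ} (X : Matrix (Fin N) (Fin N) ℂ) :
    traceNorm X ≤ √(N * ∑ r, ∑ s, ‖X r s‖ ^ 2) := by
  rw [← Matrix.sum_eigenvalues_conjTranspose_mul_self]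
  apply Real.le_sqrt_of_sq_le
  calc traceNorm X ^ 2 ≤ (Finset.univ : Finset (Fin N)).card * ∑ i, singVals X i ^ 2 :=
        sq_sum_le_card_mul_sum_sq
    _ = _ := by
        simp [singVals, Real.sq_sqrt (eigenvalues_conjTranspose_mul_self_nonneg X _)]

instance : IsFiniteMeasure muT := ⟨by simp [muT, Tset]⟩

theorem fhat_eq_fourierCoeffOn (f : ℝ → ℂ) (k : ℤ) :
    fhat f k = fourierCoeffOn (neg_lt_self Real.pi_pos) f k := by
  rw [fourierCoeffOn_eq_integral, fhat, Complex.real_smul,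
    intervalIntegral.integral_of_le (neg_le_self Real.pi_pos.le)]
  congr 1
  · push_cast
    ring
  · refine setIntegral_congr_fun measurableSet_Ioc fun t _ => ?_
    rw [fourier_coe_apply, mul_comm]
    congr 2
    push_cast
    field_simp
    ring

theorem summable_sq_norm_fhat {f : ℝ → ℂ} (hf : MemLp f 2 muT) :
    Summable fun k : ℤ => ‖fhat f k‖ ^ 2 := by
  simp_rw [fhat_eq_fourierCoeffOn]
  exact (hasSum_sq_fourierCoeffOn _ hf).summable

theorem sum_le_tsum_nat_add {c : ℕ → ℝ} (hc : Summable c) (h0 : ∀ k, 0 ≤ c k) {s : Finset ℕ}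
    {j : ℕ} (hs : ∀ k ∈ s, j ≤ k) : ∑ k ∈ s, c k ≤ ∑' k, c (k + j) := by
  have hinj : Set.InjOn (· - j) s := fun a ha b hb hab => by
    have := hs a ha; have := hs b hb; simp only at hab; omega
  calc ∑ k ∈ s, c k = ∑ k ∈ s.image (· - j), c (k + j) := by
        rw [Finset.sum_image hinj]
        exact Finset.sum_congr rfl fun k hk => by rw [Nat.sub_add_cancel (hs k hk)]
    _ ≤ ∑' k, c (k + j) :=
        (hc.comp_injective (add_left_injective j)).sum_le_tsum _ fun k _ => h0 _

theorem isLittleO_sum_range_tsum_nat_add (c : ℕ → ℝ) :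
    (fun n => ∑ j ∈ Finset.range n, ∑' k, c (k + j)) =o[atTop] (fun n => (n : ℝ)) := by
  rw [isLittleO_iff_tendsto' (Eventually.of_forall fun n hn => by simp_all)]
  exact (tendsto_sum_nat_add c).cesaro.congr fun n => by rw [div_eq_inv_mul]

theorem Asymptotics.IsLittleO.sqrt_mul {α : Type*} {l : Filter α} {u b : α → ℝ}
    (h : b =o[l] u) : (fun x => √(u x * b x)) =o[l] u := by
  rw [isLittleO_iff] at h ⊢
  intro ε hε
  filter_upwards [h (pow_pos hε 2)] with x hx
  simp only [Real.norm_eq_abs] at hx ⊢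
  rw [abs_of_nonneg (Real.sqrt_nonneg _), ← Real.sqrt_sq (by positivity : 0 ≤ ε * |u x|)]
  refine Real.sqrt_le_sqrt ?_
  calc u x * b x ≤ |u x| * |b x| := (le_abs_self _).trans (abs_mul _ _).le
    _ ≤ |u x| * (ε ^ 2 * |u x|) := mul_le_mul_of_nonneg_left hx (abs_nonneg _)
    _ = (ε * |u x|) ^ 2 := by ring

theorem le_mul_mug (n : ℕ) {g : ℕ} (hg : 0 < g) : n ≤ g * mug n g := by
  have := Nat.div_add_mod (n + g - 1) g
  have := Nat.mod_lt (n + g - 1) hg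
  unfold mug
  omega

theorem padT_apply_of_lt {n g : ℕ} (f : ℝ → ℂ) (r : Fin n) {s : Fin n} (hs : (s : ℕ) < mug n g) :
    padT n g f r s = 0 := if_pos hs

theorem sum_sq_norm_padT_col_le {n g : ℕ} (hg : 0 < g) {f : ℝ → ℂ}
    (hf : Summable fun k : ℕ => ‖fhat f (-k)‖ ^ 2) {s : Fin n} (hs : mug n g ≤ s) :
    ∑ r, ‖padT n g f r s‖ ^ 2 ≤ ∑' k : ℕ, ‖fhat f (-(k + (s - mug n g) : ℕ))‖ ^ 2 := by
  have hrow : ∀ r : Fin n, (r : ℕ) + (s - mug n g) < g * s := by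
    intro r
    have := le_mul_mug n hg
    have : (s : ℕ) - mug n g ≤ g * (s - mug n g) := Nat.le_mul_of_pos_left _ hg
    have : g * mug n g + g * (s - mug n g) = g * s := by rw [← Nat.mul_add, Nat.add_sub_cancel' hs]
    omega
  calc ∑ r, ‖padT n g f r s‖ ^ 2
      = ∑ k ∈ Finset.univ.image (fun r : Fin n => g * (s : ℕ) - r), ‖fhat f (-k)‖ ^ 2 := by
        rw [Finset.sum_image (f := fun k : ℕ => ‖fhat f (-(k : ℤ))‖ ^ 2)
          fun a _ b _ hab => Fin.ext (by have := hrow a; have := hrow b; omega)]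
        refine Finset.sum_congr rfl fun r _ => ?_
        have := hrow r
        simp only [padT, gToeplitz, of_apply, if_neg (not_lt.2 hs)]
        push_cast [Nat.cast_sub (by omega : (r : ℕ) ≤ g * s)]
        ring_nf
    _ ≤ _ := sum_le_tsum_nat_add hf (fun _ => sq_nonneg _) <| by
        simp only [Finset.mem_image, Finset.mem_univ, true_and, forall_exists_index]
        rintro _ r rfl
        have := hrow r
        omega

theorem sum_sq_norm_padT_le {n g : ℕ} (hg : 0 < g) {f : ℝ → ℂ}
    (hf : Summable fun k : ℕ => ‖fhat f (-k)‖ ^ 2) :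
    ∑ r, ∑ s, ‖padT n g f r s‖ ^ 2 ≤
      ∑ j ∈ Finset.range n, ∑' k : ℕ, ‖fhat f (-(k + j : ℕ))‖ ^ 2 := by
  set T : ℕ → ℝ := fun j => ∑' k : ℕ, ‖fhat f (-(k + j : ℕ))‖ ^ 2
  set S := Finset.univ.filter fun s : Fin n => mug n g ≤ s
  rw [Finset.sum_comm]
  calc ∑ s, ∑ r, ‖padT n g f r s‖ ^ 2 = ∑ s ∈ S, ∑ r, ‖padT n g f r s‖ ^ 2 := by
        refine (Finset.sum_filter_of_ne fun s _ hs => not_lt.1 fun hlt => hs ?_).symm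
        simp [padT_apply_of_lt f _ hlt]
    _ ≤ ∑ s ∈ S, T (s - mug n g) :=
        Finset.sum_le_sum fun s hs => sum_sq_norm_padT_col_le hg hf (Finset.mem_filter.1 hs).2
    _ = ∑ j ∈ S.image fun s : Fin n => (s : ℕ) - mug n g, T j := by
        refine (Finset.sum_image (f := T) fun a ha b hb hab => Fin.ext ?_).symm
        have := (Finset.mem_filter.1 ha).2
        have := (Finset.mem_filter.1 hb).2
        omega
    _ ≤ ∑ j ∈ Finset.range n, T j := by
        refine Finset.sum_le_sum_of_subset_of_nonneg ?_ fun j _ _ =>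
          tsum_nonneg fun _ => sq_nonneg _
        intro j hj
        obtain ⟨s, -, rfl⟩ := Finset.mem_image.1 hj
        have := s.isLt
        exact Finset.mem_range.2 (by omega)

/-- **Lemma (the padded tail of a g-Toeplitz matrix has small trace norm).**
`‖[0 | 𝒯_{n,g}]‖₁ = o(n)`. -/
theorem traceNorm_padT_isLittleO
    (f : ℝ → ℂ) (hf : MemLinf f) (g : ℕ) (hg : 2 ≤ g) :
    (fun n => traceNorm (padT n g f)) =o[atTop] (fun n => (n : ℝ)) := by
  have hc : Summable fun k : ℕ => ‖fhat f (-k)‖ ^ 2 :=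
    (summable_sq_norm_fhat (MemLp.mono_exponent hf le_top)).comp_injective
      (neg_injective.comp Nat.cast_injective)
  refine IsBigO.trans_isLittleO (isBigO_of_le _ fun n => ?_)
    (isLittleO_sum_range_tsum_nat_add fun k => ‖fhat f (-k)‖ ^ 2).sqrt_mul
  rw [Real.norm_of_nonneg (traceNorm_nonneg _), Real.norm_of_nonneg (Real.sqrt_nonneg _)]
  calc traceNorm (padT n g f) ≤ √(n * ∑ r, ∑ s, ‖padT n g f r s‖ ^ 2) :=
        traceNorm_le_sqrt_mul_sum_sq_norm _
    _ ≤ _ := Real.sqrt_le_sqrt <|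
        mul_le_mul_of_nonneg_left (sum_sq_norm_padT_le (by omega) hc) n.cast_nonneg
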